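/- Let z₁,…,zₙ be independent Bernoulli random variables with success probabilities p₁,…,pₙ ∈ (0,1], let qᵤ, tᵤ ∈ R^d be fixed vectors, with aᵤ = ‖qᵤ‖ > 0 for all u, and let γ = Σᵤ pᵤ. Then the total variance S(p) = Σᵤ ‖qᵤ‖²(1/pᵤ − 1) is minimized over all probability vectors p with Σ pᵤ = γ and 0 < pᵤ ≤ 1 exactly when pᵤ = γ·aᵤ/Σᵥ aᵥ, provided γ·aᵤ/Σᵥ aᵥ ≤ 1 for all u. -/

import Mathlib

/-!
Writing `aᵤ = ‖qᵤ‖`, `A = ∑ aᵤ` and `γ = ∑ pᵤ`, the total variance is `∑ aᵤ² / pᵤ − ∑ aᵤ²`,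
and completing the square gives
`∑ aᵤ² / pᵤ − A² / γ = ∑ (aᵤ − (A / γ) pᵤ)² / pᵤ ≥ 0`,
with equality exactly when every `pᵤ` is proportional to `aᵤ`, i.e. `pᵤ = γ aᵤ / A`.
-/

open Finset

section CompletingTheSquare

variable {ι : Type*} [Fintype ι] (a : ι → ℝ) {p : ι → ℝ}

theorem sum_sq_sub_mul_sq_div_eq (c : ℝ) (hp : ∀ u, p u ≠ 0) :
    ∑ u, (a u - c * p u) ^ 2 / p u =
      ∑ u, a u ^ 2 / p u - 2 * c * ∑ u, a u + c ^ 2 * ∑ u, p u := by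
  simp only [mul_sum, ← sum_sub_distrib, ← sum_add_distrib]
  refine sum_congr rfl fun u _ => ?_
  field_simp [hp u]
  ring

theorem sum_sq_div_eq_sq_sum_div_iff (hp : ∀ u, 0 < p u) (hA : ∑ u, a u ≠ 0) :
    ∑ u, a u ^ 2 / p u = (∑ u, a u) ^ 2 / ∑ u, p u ↔
      ∀ u, p u = (∑ v, p v) * a u / ∑ v, a v := by
  have hne : Nonempty ι := by
    by_contra h
    exact hA (by simp [not_nonempty_iff.mp h])
  have hγ : 0 < ∑ u, p u := sum_pos (fun u _ => hp u) univ_nonempty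
  have hterm : ∀ u ∈ univ, 0 ≤ (a u - (∑ v, a v) / (∑ v, p v) * p u) ^ 2 / p u :=
    fun u _ => div_nonneg (sq_nonneg _) (hp u).le
  have hsquare : ∑ u, (a u - (∑ v, a v) / (∑ v, p v) * p u) ^ 2 / p u =
      ∑ u, a u ^ 2 / p u - (∑ u, a u) ^ 2 / ∑ u, p u := by
    rw [sum_sq_sub_mul_sq_div_eq a _ fun u => (hp u).ne']
    field_simp
    ring
  rw [← sub_eq_zero, ← hsquare, sum_eq_zero_iff_of_nonneg hterm]
  refine forall_congr' fun u => ?_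
  rw [forall_prop_of_true (mem_univ u), div_eq_zero_iff, or_iff_left (hp u).ne',
    sq_eq_zero_iff, sub_eq_zero, div_mul_eq_mul_div, eq_div_iff hγ.ne', eq_div_iff hA]
  constructor <;> intro h <;> linear_combination -h

end CompletingTheSquare

section Allocation

variable {ι : Type*} [Fintype ι] {a : ι → ℝ}

noncomputable def totalVariance (a p : ι → ℝ) : ℝ := ∑ u, a u ^ 2 * (1 / p u - 1)

noncomputable def proportionalAllocation (γ : ℝ) (a : ι → ℝ) (u : ι) : ℝ :=
  γ * a u / ∑ v, a v

theorem totalVariance_eq (a p : ι → ℝ) :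
    totalVariance a p = ∑ u, a u ^ 2 / p u - ∑ u, a u ^ 2 := by
  simp only [totalVariance, mul_sub, mul_one, mul_one_div, sum_sub_distrib]

theorem sum_sq_div_proportionalAllocation (ha : ∀ u, 0 < a u) [Nonempty ι] {γ : ℝ}
    (hγ : 0 < γ) :
    ∑ u, a u ^ 2 / proportionalAllocation γ a u = (∑ u, a u) ^ 2 / γ := by
  have hA : 0 < ∑ v, a v := sum_pos (fun u _ => ha u) univ_nonempty
  have hsum : ∑ u, proportionalAllocation γ a u = γ := by
    simp only [proportionalAllocation]
    rw [← sum_div, ← mul_sum, mul_div_cancel_right₀ _ hA.ne']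
  -- `proportionalAllocation γ a` sums to `γ`, so it is its own proportional allocation
  have hopt := (sum_sq_div_eq_sq_sum_div_iff a (p := proportionalAllocation γ a)
    (fun u => div_pos (mul_pos hγ (ha u)) hA) hA.ne').mpr
  rw [hsum] at hopt
  exact hopt fun _ => rfl

theorem totalVariance_proportionalAllocation (ha : ∀ u, 0 < a u) [Nonempty ι] {γ : ℝ}
    (hγ : 0 < γ) :
    totalVariance a (proportionalAllocation γ a) = (∑ u, a u) ^ 2 / γ - ∑ u, a u ^ 2 := by
  rw [totalVariance_eq, sum_sq_div_proportionalAllocation ha hγ]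

variable {p : ι → ℝ}

theorem totalVariance_proportionalAllocation_le (ha : ∀ u, 0 < a u) (hp : ∀ u, 0 < p u) :
    totalVariance a (proportionalAllocation (∑ u, p u) a) ≤ totalVariance a p := by
  rcases isEmpty_or_nonempty ι with hι | hι
  · simp [totalVariance]
  rw [totalVariance_proportionalAllocation ha (sum_pos (fun u _ => hp u) univ_nonempty),
    totalVariance_eq]
  exact sub_le_sub_right (sq_sum_div_le_sum_sq_div univ a fun u _ => hp u) _

theorem totalVariance_eq_proportionalAllocation_iff (ha : ∀ u, 0 < a u) (hp : ∀ u, 0 < p u) :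
    totalVariance a p = totalVariance a (proportionalAllocation (∑ u, p u) a) ↔
      p = proportionalAllocation (∑ u, p u) a := by
  rcases isEmpty_or_nonempty ι with hι | hι
  · simp [totalVariance, funext_iff]
  rw [totalVariance_proportionalAllocation ha (sum_pos (fun u _ => hp u) univ_nonempty),
    totalVariance_eq, sub_left_inj, funext_iff]
  exact sum_sq_div_eq_sq_sum_div_iff a hp (sum_pos (fun u _ => ha u) univ_nonempty).ne'

end Allocation

open MeasureTheory ProbabilityTheory

theorem stmt_5_general {n d : ℕ} (q : Fin n → Fin d → ℝ)
    (a : Fin n → ℝ) (ha : ∀ u, a u = Real.sqrt (∑ i, (q u i) ^ 2))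
    (hapos : ∀ u, 0 < a u)
    (γ : ℝ) :
    (∀ p' : Fin n → ℝ, (∀ u, 0 < p' u) → (∀ u, p' u ≤ 1) → ∑ u, p' u = γ →
        ∑ u, (∑ i, (q u i) ^ 2) * (1 / (γ * a u / (∑ v, a v)) - 1) ≤
          ∑ u, (∑ i, (q u i) ^ 2) * (1 / p' u - 1)) ∧
      ∀ p' : Fin n → ℝ, (∀ u, 0 < p' u) → (∀ u, p' u ≤ 1) → ∑ u, p' u = γ →
        (∑ u, (∑ i, (q u i) ^ 2) * (1 / p' u - 1) =
            ∑ u, (∑ i, (q u i) ^ 2) * (1 / (γ * a u / (∑ v, a v)) - 1) ↔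
          ∀ u, p' u = γ * a u / (∑ v, a v)) := by
  have hq : ∀ u, ∑ i, q u i ^ 2 = a u ^ 2 := fun u => by
    rw [ha u, Real.sq_sqrt (by positivity)]
  simp only [hq]
  refine ⟨fun p' hp' _ hsum => ?_, fun p' hp' _ hsum => ?_⟩
  · subst hsum
    exact totalVariance_proportionalAllocation_le hapos hp'
  · subst hsum
    exact (totalVariance_eq_proportionalAllocation_iff hapos hp').trans funext_iff

/-- Theorem 1 (SRPE minimum-variance recomputation probabilities): for independent
Bernoulli variables `zᵤ` with probabilities `pᵤ ∈ (0,1]` and budget `γ = ∑ pᵤ`,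
the total variance `S(p) = ∑ᵤ ‖qᵤ‖²(1/pᵤ − 1)` over all feasible probability
vectors with the same budget is minimized exactly at `pᵤ = γ·aᵤ/∑ᵥ aᵥ`, where
`aᵤ = ‖qᵤ‖ > 0`, provided `γ·aᵤ/∑ᵥ aᵥ ≤ 1` for all `u`. -/
theorem stmt_5 {Ω : Type*} [MeasureSpace Ω] [IsProbabilityMeasure (ℙ : Measure Ω)]
    {n d : ℕ} (q t : Fin n → Fin d → ℝ) (p : Fin n → ℝ)
    (hp0 : ∀ u, 0 < p u) (hp1 : ∀ u, p u ≤ 1)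
    (z : Fin n → Ω → ℝ) (hz01 : ∀ u, ∀ ω : Ω, z u ω = 0 ∨ z u ω = 1)
    (hzmeas : ∀ u, Measurable (z u))
    (hzp : ∀ u, (ℙ : Measure Ω) {ω : Ω | z u ω = 1} = ENNReal.ofReal (p u))
    (hindep : iIndepFun z ℙ)
    (a : Fin n → ℝ) (ha : ∀ u, a u = Real.sqrt (∑ i, (q u i) ^ 2))
    (hapos : ∀ u, 0 < a u)
    (γ : ℝ) (hγ : γ = ∑ u, p u)
    (hbudget : ∀ u, γ * a u / (∑ v, a v) ≤ 1) :
    (∀ p' : Fin n → ℝ, (∀ u, 0 < p' u) → (∀ u, p' u ≤ 1) → ∑ u, p' u = γ →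
        ∑ u, (∑ i, (q u i) ^ 2) * (1 / (γ * a u / (∑ v, a v)) - 1) ≤
          ∑ u, (∑ i, (q u i) ^ 2) * (1 / p' u - 1)) ∧
      ∀ p' : Fin n → ℝ, (∀ u, 0 < p' u) → (∀ u, p' u ≤ 1) → ∑ u, p' u = γ →
        (∑ u, (∑ i, (q u i) ^ 2) * (1 / p' u - 1) =
            ∑ u, (∑ i, (q u i) ^ 2) * (1 / (γ * a u / (∑ v, a v)) - 1) ↔
          ∀ u, p' u = γ * a u / (∑ v, a v)) :=
  stmt_5_general q a ha hapos γ
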